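/- arXiv:1403.0233 — 2 statements merged into one kernel-verified Lean document; each statement's English description precedes it below -/
import Mathlib

section
/- For all n ≥ 1 and i, j ≥ 0, the coefficients d_{n,i,j} satisfy d_{2n,i,j} = (2i+1)d_{2n-1,i,j} + (2j+2)d_{2n-1,i-1,j+1} + (4n-2i-2j+1)d_{2n-1,i-1,j} and d_{2n+1,i,j} = (2i+1)d_{2n,i,j-1} + (2j+1)d_{2n,i-1,j} + (4n-2i-2j+4)d_{2n,i-1,j-1}. -/
open MvPolynomial Finset

/-- The Dumont derivation on `ℚ[x,y,z]`: `D x = y*z`, `D y = x*z`, `D z = x*y`. -/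
noncomputable def Dum : Derivation ℚ (MvPolynomial (Fin 3) ℚ) (MvPolynomial (Fin 3) ℚ) :=
  MvPolynomial.mkDerivation ℚ ![X 1 * X 2, X 0 * X 2, X 0 * X 1]

/-- The operator `p ↦ D (x * p)`. -/
noncomputable def Dx : MvPolynomial (Fin 3) ℚ → MvPolynomial (Fin 3) ℚ :=
  fun p => Dum (X 0 * p)

/-- `dC n i j` is the coefficient `d_{n,i,j}` of `(Dx)^n(y)`:
for even `n`, the coefficient of `x^(2i) y^(2j+1) z^(2n-2i-2j)`;
for odd `n`, the coefficient of `x^(2i) y^(2j) z^(2n+1-2i-2j)`.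
Coefficients with negative indices are `0`. -/
noncomputable def dC (n : ℕ) (i j : ℤ) : ℚ :=
  if 0 ≤ i ∧ 0 ≤ j then
    MvPolynomial.coeff
      (Finsupp.single 0 (2*i).toNat
        + Finsupp.single 1 ((if Even n then 2*j+1 else 2*j).toNat)
        + Finsupp.single 2 ((2*(n:ℤ) - 2*i - 2*j + if Even n then 0 else 1).toNat))
      (Dx^[n] (X 1))
  else 0

/-!
Extend the coefficients of a polynomial by `0` to integer exponent vectors. Since
`D (x q) = y z q + x (y z ∂ₓ + x z ∂_y + x y ∂_z) q`, the coefficient of `x^a y^b z^c` in `Dx q`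
is `(a+1) [x^a y^(b-1) z^(c-1)] q + (b+1) [x^(a-2) y^(b+1) z^(c-1)] q`
`+ (c+1) [x^(a-2) y^(b-1) z^(c+1)] q` for all integers `a b c`: at the boundary the offending terms
carry the factor `0`. Specialised to the exponents of `d_{n,i,j}` this is the pair of recurrences.
The one subtlety is that `dC` truncates a negative exponent of `z` to `0`; such coefficients vanish
anyway, because `(Dx)^n(y)` is homogeneous of degree `2n+1`.
-/

section IntegerExponents

variable {σ R : Type*} [Finite σ]

open scoped Classical in
/-- Zero as soon as an entry of `v` is negative, as in the paper; this is what lets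
`coeffInt_X_mul` and `coeffInt_pderiv` hold without side conditions. -/
noncomputable def coeffInt [CommSemiring R] (v : σ → ℤ) : MvPolynomial σ R →ₗ[R] R :=
  if 0 ≤ v then lcoeff R (Finsupp.equivFunOnFinite.symm fun i => (v i).toNat) else 0

section CommSemiring

variable [CommSemiring R] {v : σ → ℤ}

lemma coeffInt_of_nonneg (hv : 0 ≤ v) (q : MvPolynomial σ R) :
    coeffInt v q = coeff (Finsupp.equivFunOnFinite.symm fun i => (v i).toNat) q := by
  simp [coeffInt, hv]

lemma coeffInt_of_not_nonneg (hv : ¬ 0 ≤ v) (q : MvPolynomial σ R) : coeffInt v q = 0 := by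
  simp [coeffInt, hv]

lemma coeffInt_X_mul [DecidableEq σ] (k : σ) (q : MvPolynomial σ R) :
    coeffInt v (X k * q) = coeffInt (v - Pi.single k 1) q := by
  by_cases hv : 0 ≤ v
  · rw [coeffInt_of_nonneg hv, coeff_X_mul']
    by_cases hk : 0 < v k
    · have hv' : 0 ≤ v - Pi.single k 1 := fun i => by
        rcases eq_or_ne i k with rfl | hi
        · simp only [Pi.zero_apply, Pi.sub_apply, Pi.single_eq_same, Int.sub_nonneg]
          omega
        · simpa [hi] using hv i
      rw [if_pos (by simpa using hk), coeffInt_of_nonneg hv']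
      congr 1
      ext i
      rcases eq_or_ne i k with rfl | hi
      · simp
      · simp [Pi.single_apply, hi]
    · rw [if_neg (by simpa using hk), coeffInt_of_not_nonneg]
      intro h
      have := h k
      simp only [Pi.zero_apply, Pi.sub_apply, Pi.single_eq_same, Int.sub_nonneg] at this
      omega
  · rw [coeffInt_of_not_nonneg hv, coeffInt_of_not_nonneg]
    exact fun h => hv (h.trans (sub_le_self v (Pi.single_nonneg.2 zero_le_one)))

end CommSemiring

lemma coeffInt_pderiv [CommRing R] [DecidableEq σ] {v : σ → ℤ} (k : σ)
    (q : MvPolynomial σ R) :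
    coeffInt v (pderiv k q) = (v k + 1) * coeffInt (v + Pi.single k 1) q := by
  by_cases hv : 0 ≤ v
  · have hv' : 0 ≤ v + Pi.single k 1 := add_nonneg hv (Pi.single_nonneg.2 zero_le_one)
    rw [coeffInt_of_nonneg hv, coeffInt_of_nonneg hv', coeff_pderiv, mul_comm]
    congr 2
    · rw [Finsupp.coe_equivFunOnFinite_symm, ← Int.cast_natCast, Int.toNat_of_nonneg (hv k)]
    · ext i
      have : 0 ≤ v i := hv i
      rcases eq_or_ne i k with rfl | hi
      · simp only [Finsupp.coe_add, Finsupp.coe_equivFunOnFinite_symm, Pi.add_apply,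
          Finsupp.single_eq_same, Pi.single_eq_same]
        omega
      · simp [Pi.single_apply, hi]
  · by_cases hv' : 0 ≤ v + Pi.single k 1
    · -- the negative entry of `v` is repaired by `Pi.single k 1`, so the factor `v k + 1` is `0`
      have hk : v k = -1 := by
        obtain ⟨i, hi⟩ := not_forall.mp hv
        have hvi := hv' i
        rcases eq_or_ne i k with rfl | hik
        · simp only [Pi.zero_apply, not_le, Pi.add_apply, Pi.single_eq_same] at hi hvi
          omega
        · simp only [Pi.zero_apply, not_le, Pi.add_apply, Pi.single_eq_of_ne hik, add_zero]
            at hi hvi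
          omega
      simp [hk, coeffInt_of_not_nonneg hv]
    · simp [coeffInt_of_not_nonneg hv, coeffInt_of_not_nonneg hv']

end IntegerExponents

lemma mkDerivation_eq_sum_smul_pderiv {σ R : Type*} [CommSemiring R] [Fintype σ] [DecidableEq σ]
    (f : σ → MvPolynomial σ R) : mkDerivation R f = ∑ i, f i • pderiv i := by
  refine derivation_ext fun i => ?_
  rw [← Derivation.coeFnAddMonoidHom_apply (∑ i, f i • pderiv i), map_sum, Finset.sum_apply]
  simp [pderiv_X, Pi.single_apply]

lemma Dx_apply (q : MvPolynomial (Fin 3) ℚ) :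
    Dx q = X 1 * (X 2 * q) + X 0 * (X 1 * (X 2 * pderiv 0 q))
      + X 0 * (X 0 * (X 2 * pderiv 1 q)) + X 0 * (X 0 * (X 1 * pderiv 2 q)) := by
  simp only [Dx, Dum, mkDerivation_eq_sum_smul_pderiv, Derivation.leibniz, Fin.sum_univ_three,
    Derivation.coe_add, Derivation.coe_smul, Pi.add_apply, Pi.smul_apply, smul_eq_mul, pderiv_X,
    Matrix.cons_val_zero, Matrix.cons_val_one, Matrix.cons_val, Pi.single_apply, Fin.reduceEq,
    if_true, if_false]
  ring

lemma coeffInt_Dx (q : MvPolynomial (Fin 3) ℚ) (a b c : ℤ) :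
    coeffInt ![a, b, c] (Dx q)
      = (a + 1) * coeffInt ![a, b - 1, c - 1] q + (b + 1) * coeffInt ![a - 2, b + 1, c - 1] q
        + (c + 1) * coeffInt ![a - 2, b - 1, c + 1] q := by
  have e₀ : (Pi.single 0 1 : Fin 3 → ℤ) = ![1, 0, 0] := by ext k; fin_cases k <;> rfl
  have e₁ : (Pi.single 1 1 : Fin 3 → ℤ) = ![0, 1, 0] := by ext k; fin_cases k <;> rfl
  have e₂ : (Pi.single 2 1 : Fin 3 → ℤ) = ![0, 0, 1] := by ext k; fin_cases k <;> rfl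
  simp only [Dx_apply, map_add, coeffInt_X_mul, coeffInt_pderiv, e₀, e₁, e₂,
    Matrix.cons_sub_cons, Matrix.cons_add_cons, Matrix.empty_sub_empty, Matrix.empty_add_empty,
    sub_zero, add_zero, Matrix.cons_val_zero, Matrix.cons_val_one, Matrix.cons_val, Int.cast_sub,
    Int.cast_one]
  ring_nf

lemma isHomogeneous_Dx {q : MvPolynomial (Fin 3) ℚ} {d : ℕ} (hq : q.IsHomogeneous (d + 1)) :
    (Dx q).IsHomogeneous (d + 3) := by
  have hX := isHomogeneous_X ℚ (σ := Fin 3)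
  rw [Dx_apply]
  refine (((?_ : IsHomogeneous _ _).add ?_).add ?_).add ?_
  · convert (hX 1).mul ((hX 2).mul hq) using 1; ring
  all_goals convert (hX 0).mul ((hX _).mul ((hX _).mul hq.pderiv)) using 1; omega

lemma isHomogeneous_Dx_iterate (n : ℕ) : (Dx^[n] (X 1)).IsHomogeneous (2 * n + 1) := by
  induction n with
  | zero => exact isHomogeneous_X ℚ 1
  | succ n ih => rw [Function.iterate_succ_apply']; exact isHomogeneous_Dx ih

lemma coeff_toNat_eq_coeffInt {σ R : Type*} [Fintype σ] [CommSemiring R] {q : MvPolynomial σ R}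
    {d : ℕ} (hq : q.IsHomogeneous d) {v : σ → ℤ} (hv : ∑ i, v i = d) :
    coeff (Finsupp.equivFunOnFinite.symm fun i => (v i).toNat) q = coeffInt v q := by
  by_cases h : 0 ≤ v
  · rw [coeffInt_of_nonneg h]
  rw [coeffInt_of_not_nonneg h]
  refine hq.coeff_eq_zero fun hd => ?_
  obtain ⟨k, hk⟩ := not_forall.mp h
  have hk' : v k < (v k).toNat := by
    simp only [Pi.zero_apply, not_le] at hk
    omega
  have : ∑ i, v i < ∑ i, ((v i).toNat : ℤ) :=
    Finset.sum_lt_sum (fun i _ => Int.self_le_toNat _) ⟨k, Finset.mem_univ _, hk'⟩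
  rw [Finsupp.degree_eq_sum, Finsupp.coe_equivFunOnFinite_symm] at hd
  zify at hd
  omega

lemma dC_eq_coeffInt (n : ℕ) (i j : ℤ) :
    dC n i j = coeffInt ![2 * i, if Even n then 2 * j + 1 else 2 * j,
      2 * n - 2 * i - 2 * j + if Even n then 0 else 1] (Dx^[n] (X 1)) := by
  by_cases hij : 0 ≤ i ∧ 0 ≤ j
  · rw [dC, if_pos hij, ← coeff_toNat_eq_coeffInt (isHomogeneous_Dx_iterate n)]
    · congr 1
      ext k
      fin_cases k <;> simp
    · simp only [Fin.sum_univ_three, Matrix.cons_val_zero, Matrix.cons_val_one, Matrix.cons_val]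
      split_ifs <;> push_cast <;> ring
  · refine (if_neg hij).trans (coeffInt_of_not_nonneg (fun h => hij ⟨?_, ?_⟩) _).symm
    · simpa using h 0
    · have := h 1
      simp only [Pi.zero_apply, Matrix.cons_val_one, Matrix.cons_val_zero] at this
      split_ifs at this <;> omega

lemma dC_two_mul_eq_coeffInt (n : ℕ) (i j : ℤ) :
    dC (2 * n) i j = coeffInt ![2 * i, 2 * j + 1, 4 * n - 2 * i - 2 * j] (Dx^[2 * n] (X 1)) := by
  simp only [dC_eq_coeffInt, even_two_mul, if_true]
  push_cast
  ring_nf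

lemma dC_two_mul_add_one_eq_coeffInt (n : ℕ) (i j : ℤ) :
    dC (2 * n + 1) i j =
      coeffInt ![2 * i, 2 * j, 4 * n - 2 * i - 2 * j + 3] (Dx^[2 * n + 1] (X 1)) := by
  have h : ¬ Even (2 * n + 1) := by simp
  simp only [dC_eq_coeffInt, h, if_false]
  push_cast
  ring_nf

lemma dC_two_mul_add_one (n : ℕ) (i j : ℤ) :
    dC (2 * n + 1) i j =
      (2 * i + 1) * dC (2 * n) i (j - 1) + (2 * j + 1) * dC (2 * n) (i - 1) j
        + (4 * n - 2 * i - 2 * j + 4) * dC (2 * n) (i - 1) (j - 1) := by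
  rw [dC_two_mul_add_one_eq_coeffInt, Function.iterate_succ_apply', coeffInt_Dx]
  simp only [dC_two_mul_eq_coeffInt]
  push_cast
  ring_nf

lemma dC_two_mul_add_two (n : ℕ) (i j : ℤ) :
    dC (2 * n + 2) i j =
      (2 * i + 1) * dC (2 * n + 1) i j + (2 * j + 2) * dC (2 * n + 1) (i - 1) (j + 1)
        + (4 * n - 2 * i - 2 * j + 5) * dC (2 * n + 1) (i - 1) j := by
  rw [show 2 * n + 2 = 2 * (n + 1) by ring, dC_two_mul_eq_coeffInt,
    show 2 * (n + 1) = 2 * n + 1 + 1 by ring, Function.iterate_succ_apply', coeffInt_Dx]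
  simp only [dC_two_mul_add_one_eq_coeffInt]
  push_cast
  ring_nf

theorem stmt6_general (n : ℕ) (hn : 1 ≤ n) (i j : ℤ) :
    dC (2*n) i j =
      (2*(i:ℚ)+1) * dC (2*n-1) i j + (2*(j:ℚ)+2) * dC (2*n-1) (i-1) (j+1)
        + (4*(n:ℚ)-2*(i:ℚ)-2*(j:ℚ)+1) * dC (2*n-1) (i-1) j ∧
    dC (2*n+1) i j =
      (2*(i:ℚ)+1) * dC (2*n) i (j-1) + (2*(j:ℚ)+1) * dC (2*n) (i-1) j
        + (4*(n:ℚ)-2*(i:ℚ)-2*(j:ℚ)+4) * dC (2*n) (i-1) (j-1) := by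
  refine ⟨?_, dC_two_mul_add_one n i j⟩
  obtain ⟨m, rfl⟩ := Nat.exists_eq_add_of_le' hn
  rw [show 2 * (m + 1) - 1 = 2 * m + 1 by omega, mul_add_one, dC_two_mul_add_two]
  push_cast
  ring

theorem stmt6 (n : ℕ) (hn : 1 ≤ n) (i j : ℤ) (hi : 0 ≤ i) (hj : 0 ≤ j) :
    dC (2*n) i j =
      (2*(i:ℚ)+1) * dC (2*n-1) i j + (2*(j:ℚ)+2) * dC (2*n-1) (i-1) (j+1)
        + (4*(n:ℚ)-2*(i:ℚ)-2*(j:ℚ)+1) * dC (2*n-1) (i-1) j ∧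
    dC (2*n+1) i j =
      (2*(i:ℚ)+1) * dC (2*n) i (j-1) + (2*(j:ℚ)+1) * dC (2*n) (i-1) j
        + (4*(n:ℚ)-2*(i:ℚ)-2*(j:ℚ)+4) * dC (2*n) (i-1) (j-1) :=
  stmt6_general n hn i j
end

section
/- For all n ≥ 1 and i, j ≥ 0, the coefficients b_{n,i,j} satisfy b_{2n,i,j} = (4n-2i-2j)b_{2n-1,i-1,j-1} + (2i+2)b_{2n-1,i,j-1} + (2j+1)b_{2n-1,i-1,j} and b_{2n+1,i,j} = (4n-2i-2j+1)b_{2n,i-1,j} + (2i+2)b_{2n,i,j} + (2j+2)b_{2n,i-1,j+1}; moreover Σ_{i,j≥0} b_{n,i,j} = (2n-1)!!. -/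
open MvPolynomial Finset

/-- The operator `p ↦ x * D p`. -/
noncomputable def xD : MvPolynomial (Fin 3) ℚ → MvPolynomial (Fin 3) ℚ :=
  fun p => X 0 * Dum p

/-- `bC n i j` is the coefficient `b_{n,i,j}` of `(xD)^n(y)`:
for even `n`, the coefficient of `x^(2i+2) y^(2n-1-2i-2j) z^(2j)`;
for odd `n`, the coefficient of `x^(2i+2) y^(2n-2-2i-2j) z^(2j+1)`.
Coefficients with negative indices are `0`. -/
noncomputable def bC (n : ℕ) (i j : ℤ) : ℚ :=
  if 0 ≤ i ∧ 0 ≤ j then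
    MvPolynomial.coeff
      (Finsupp.single 0 (2*i+2).toNat
        + Finsupp.single 1 ((2*(n:ℤ) - 2*i - 2*j - if Even n then 1 else 2).toNat)
        + Finsupp.single 2 ((if Even n then 2*j else 2*j+1).toNat))
      (xD^[n] (X 1))
  else 0

/-!
Since `xD p = x·yz ∂ₓp + x·xz ∂_y p + x·xy ∂_z p`, the coefficient of `x^a y^b z^c` in `xD p` is
`a [a, b-1, c-1] + (b+1) [a-2, b+1, c-1] + (c+1) [a-2, b-1, c+1]`, where `[·,·,·]` are the
coefficients of `p`; read at the exponents of `b_{n,i,j}`, this is the pair of recurrences.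

`(xD)^n(y)` is homogeneous of degree `2n+1`, and by Euler's identity `Σ xᵢ ∂ᵢ p = d p`,
evaluating at `(1,1,1)` turns `xD` into multiplication by the degree. So the coefficients of
`(xD)^n(y)` add up to `1·3⋯(2n-1)`, and they are exactly the `b_{n,i,j}`: every monomial of
`(xD)^n(y)` has an even `x`-exponent `≥ 2` and a `z`-exponent of the parity of `n`.
-/

open scoped Nat

namespace MvPolynomial

variable {R σ : Type*} [CommRing R] [Fintype σ]

/-- Extended by `0` to negative exponents, so that the coefficient formula for `xD`
(`intCoeff_xD`) holds for all integer exponents, without boundary cases. -/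
noncomputable def intCoeff (e : σ → ℤ) (p : MvPolynomial σ R) : R :=
  if ∀ i, 0 ≤ e i then coeff (Finsupp.equivFunOnFinite.symm fun i => (e i).toNat) p else 0

lemma intCoeff_of_neg {e : σ → ℤ} {i : σ} (h : e i < 0) (p : MvPolynomial σ R) :
    intCoeff e p = 0 :=
  if_neg fun he => (he i).not_gt h

lemma intCoeff_natCast (m : σ →₀ ℕ) (p : MvPolynomial σ R) :
    intCoeff (fun i => (m i : ℤ)) p = coeff m p := by
  rw [intCoeff, if_pos fun i => Int.natCast_nonneg _]
  congr
  ext i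
  simp

lemma intCoeff_add (e : σ → ℤ) (p q : MvPolynomial σ R) :
    intCoeff e (p + q) = intCoeff e p + intCoeff e q := by
  unfold intCoeff
  split_ifs <;> simp

lemma exists_of_intCoeff_ne_zero {e : σ → ℤ} {p : MvPolynomial σ R} (h : intCoeff e p ≠ 0) :
    ∃ m ∈ p.support, e = fun i => (m i : ℤ) := by
  unfold intCoeff at h
  split_ifs at h with he
  · refine ⟨_, mem_support_iff.mpr h, ?_⟩
    funext i
    simp [Int.toNat_of_nonneg (he i)]
  · exact absurd rfl h

variable [DecidableEq σ]

lemma intCoeff_X_mul (i : σ) (e : σ → ℤ) (p : MvPolynomial σ R) :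
    intCoeff e (X i * p) = intCoeff (e - Pi.single i 1) p := by
  have hs : 0 ≤ (Pi.single i 1 : σ → ℤ) := Pi.single_nonneg.mpr zero_le_one
  unfold intCoeff
  by_cases he : ∀ k, 0 ≤ (e - Pi.single i 1 : σ → ℤ) k
  · have hi := he i
    rw [if_pos fun k => (he k).trans (sub_le_self _ (hs k)), if_pos he, coeff_X_mul',
      if_pos (by simp at hi ⊢; omega)]
    congr
    ext k
    by_cases hk : k = i <;> simp [hk]
  · rw [if_neg he]
    split_ifs with he'
    · rw [coeff_X_mul', if_neg]
      intro hi
      refine he fun k => ?_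
      rcases eq_or_ne k i with rfl | hk
      · simp at hi ⊢; omega
      · simpa [hk] using he' k
    · rfl

lemma intCoeff_pderiv (i : σ) (e : σ → ℤ) (p : MvPolynomial σ R) :
    intCoeff e (pderiv i p) = (e i + 1 : ℤ) * intCoeff (e + Pi.single i 1) p := by
  have hs : 0 ≤ (Pi.single i 1 : σ → ℤ) := Pi.single_nonneg.mpr zero_le_one
  unfold intCoeff
  by_cases he : ∀ k, 0 ≤ e k
  · rw [if_pos he, if_pos (show ∀ k, 0 ≤ (e + Pi.single i 1 : σ → ℤ) k from
      fun k => add_nonneg (he k) (hs k)), coeff_pderiv, mul_comm]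
    congr 1
    · simp only [Finsupp.equivFunOnFinite_symm_apply_apply]
      rw [← Int.cast_natCast, Int.toNat_of_nonneg (he i)]
      norm_cast
    · congr
      ext k
      rcases eq_or_ne k i with rfl | hk
      · simp; have := he k; omega
      · simp [hk]
  · rw [if_neg he]
    split_ifs with he'
    · obtain ⟨k, hk⟩ : ∃ k, e k < 0 := by simpa using he
      obtain rfl : k = i := by
        by_contra hki
        have := he' k
        simp [hki] at this
        omega
      have := he' k
      simp at this
      rw [show e k + 1 = 0 by omega]
      simp
    · simp

end MvPolynomial

lemma Dum_apply (p : MvPolynomial (Fin 3) ℚ) :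
    Dum p = X 1 * (X 2 * pderiv 0 p) + X 0 * (X 2 * pderiv 1 p) + X 0 * (X 1 * pderiv 2 p) := by
  have : Dum = (X 1 * X 2 : MvPolynomial (Fin 3) ℚ) • pderiv 0
      + (X 0 * X 2 : MvPolynomial (Fin 3) ℚ) • pderiv 1
      + (X 0 * X 1 : MvPolynomial (Fin 3) ℚ) • pderiv 2 := by
    refine derivation_ext fun i => ?_
    fin_cases i <;> simp [Dum, mkDerivation_X, pderiv_X]
  rw [this]
  simp [mul_assoc]

lemma xD_apply (p : MvPolynomial (Fin 3) ℚ) :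
    xD p = X 0 * (X 1 * (X 2 * pderiv 0 p) + X 0 * (X 2 * pderiv 1 p)
      + X 0 * (X 1 * pderiv 2 p)) := by
  rw [xD, Dum_apply]

lemma intCoeff_xD (a b c : ℤ) (p : MvPolynomial (Fin 3) ℚ) :
    intCoeff ![a, b, c] (xD p) = a * intCoeff ![a, b - 1, c - 1] p
      + (b + 1) * intCoeff ![a - 2, b + 1, c - 1] p
      + (c + 1) * intCoeff ![a - 2, b - 1, c + 1] p := by
  simp only [xD_apply, intCoeff_X_mul, intCoeff_add, intCoeff_pderiv]
  have h0 : ![a, b, c] - Pi.single 0 1 - Pi.single 1 1 - Pi.single 2 1 + Pi.single 0 1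
      = ![a, b - 1, c - 1] := by
    ext k
    fin_cases k <;> simp [-Matrix.cons_sub]
  have h1 : ![a, b, c] - Pi.single 0 1 - Pi.single 0 1 - Pi.single 2 1 + Pi.single 1 1
      = ![a - 2, b + 1, c - 1] := by
    ext k
    fin_cases k <;> simp [-Matrix.cons_sub]
    ring
  have h2 : ![a, b, c] - Pi.single 0 1 - Pi.single 0 1 - Pi.single 1 1 + Pi.single 2 1
      = ![a - 2, b - 1, c + 1] := by
    ext k
    fin_cases k <;> simp [-Matrix.cons_sub]
    ring
  rw [h0, h1, h2]
  simp [-Matrix.cons_sub]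

lemma intCoeff_zero_xD (b c : ℤ) (p : MvPolynomial (Fin 3) ℚ) :
    intCoeff ![0, b, c] (xD p) = 0 := by
  have h (v w : ℤ) : intCoeff ![-2, v, w] p = 0 := intCoeff_of_neg (i := 0) (by simp) p
  simp [intCoeff_xD, h]

lemma isHomogeneous_xD {p : MvPolynomial (Fin 3) ℚ} {d : ℕ} (h : p.IsHomogeneous (d + 1)) :
    (xD p).IsHomogeneous (d + 3) := by
  have hX : ∀ {q : MvPolynomial (Fin 3) ℚ} {k : ℕ} (i : Fin 3), q.IsHomogeneous k →
      (X i * q).IsHomogeneous (k + 1) := fun i hq => by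
    simpa [add_comm] using (isHomogeneous_X ℚ i).mul hq
  have hd (i : Fin 3) : (pderiv i p).IsHomogeneous d := by simpa using h.pderiv (i := i)
  rw [xD_apply]
  exact hX 0 (((hX 1 (hX 2 (hd 0))).add (hX 0 (hX 2 (hd 1)))).add (hX 0 (hX 1 (hd 2))))

lemma isHomogeneous_xD_iterate (n : ℕ) : (xD^[n] (X 1)).IsHomogeneous (2 * n + 1) := by
  induction n with
  | zero => exact isHomogeneous_X ℚ 1
  | succ n ih => rw [Function.iterate_succ_apply']; exact isHomogeneous_xD ih

lemma eval_one_xD {p : MvPolynomial (Fin 3) ℚ} {d : ℕ} (h : p.IsHomogeneous d) :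
    eval 1 (xD p) = d * eval 1 p :=
  calc eval 1 (xD p) = eval 1 (∑ i, X i * pderiv i p) := by
        simp [xD_apply, Fin.sum_univ_three]
    _ = d * eval 1 p := by rw [h.sum_X_mul_pderiv]; simp

lemma eval_one_xD_iterate (n : ℕ) : eval 1 (xD^[n] (X 1)) = (2 * n - 1)‼ := by
  induction n with
  | zero => simp
  | succ n ih =>
    rw [Function.iterate_succ_apply', eval_one_xD (isHomogeneous_xD_iterate n), ih,
      show 2 * (n + 1) - 1 = 2 * n + 1 by omega, Nat.doubleFactorial_add_one]
    push_cast
    ring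

lemma parity_of_intCoeff_xD_iterate_ne_zero (n : ℕ) {a b c : ℤ}
    (h : intCoeff ![a, b, c] (xD^[n] (X 1)) ≠ 0) : Even a ∧ (Even c ↔ Even n) := by
  induction n generalizing a b c with
  | zero =>
    obtain ⟨m, hm, he⟩ := exists_of_intCoeff_ne_zero h
    rw [Function.iterate_zero_apply, support_X, Finset.mem_singleton] at hm
    subst hm
    have ha := congrFun he 0
    have hc := congrFun he 2
    simp_all
  | succ n ih =>
    rw [Function.iterate_succ_apply', intCoeff_xD] at h
    obtain h | h | h : intCoeff ![a, b - 1, c - 1] (xD^[n] (X 1)) ≠ 0 ∨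
        intCoeff ![a - 2, b + 1, c - 1] (xD^[n] (X 1)) ≠ 0 ∨
        intCoeff ![a - 2, b - 1, c + 1] (xD^[n] (X 1)) ≠ 0 := by
      by_contra! hc
      simp [hc] at h
    all_goals
      have := ih h
      simp only [Int.even_add_one, Nat.even_add_one, Int.even_sub, even_two, iff_true] at this ⊢
      tauto

lemma bC_eq_intCoeff {n : ℕ} (hn : 1 ≤ n) (i j : ℤ) :
    bC n i j = intCoeff ![2 * i + 2, 2 * n - 2 * i - 2 * j - if Even n then 1 else 2,
      if Even n then 2 * j else 2 * j + 1] (xD^[n] (X 1)) := by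
  unfold bC
  by_cases hij : 0 ≤ i ∧ 0 ≤ j
  · rw [if_pos hij]
    by_cases hy : 0 ≤ 2 * (n : ℤ) - 2 * i - 2 * j - if Even n then 1 else 2
    · unfold intCoeff
      rw [if_pos fun k => by fin_cases k <;> simp <;> split_ifs at hy ⊢ <;> omega]
      congr 1
      ext k
      fin_cases k <;> simp
    -- `toNat` truncates the negative `y`-exponent to `0`, leaving a monomial of the wrong degree.
    · rw [intCoeff_of_neg (i := 1) (by simpa using hy)]
      apply (isHomogeneous_xD_iterate n).coeff_eq_zero
      simp only [map_add, Finsupp.degree_single]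
      split_ifs <;> omega
  · rw [if_neg hij]
    by_cases hj : j < 0
    · exact (intCoeff_of_neg (i := 2) (by simp; split_ifs <;> omega) _).symm
    by_cases hi : i < -1
    · exact (intCoeff_of_neg (i := 0) (by simp; omega) _).symm
    obtain ⟨k, rfl⟩ : ∃ k, n = k + 1 := ⟨n - 1, by omega⟩
    rw [show i = -1 by omega, Function.iterate_succ_apply']
    norm_num [intCoeff_zero_xD]

lemma bC_two_mul {n : ℕ} (hn : 1 ≤ n) (i j : ℤ) :
    bC (2*n) i j =
      (4*(n:ℚ)-2*(i:ℚ)-2*(j:ℚ)) * bC (2*n-1) (i-1) (j-1) + (2*(i:ℚ)+2) * bC (2*n-1) i (j-1)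
        + (2*(j:ℚ)+1) * bC (2*n-1) (i-1) j := by
  have hodd : ¬ Even (2 * n - 1) := by rw [Nat.not_even_iff_odd]; exact ⟨n - 1, by omega⟩
  have hsucc : 2 * n = 2 * n - 1 + 1 := by omega
  simp only [bC_eq_intCoeff (by omega : 1 ≤ 2 * n - 1), bC_eq_intCoeff (by omega : 1 ≤ 2 * n),
    hodd, even_two_mul, if_true, if_false]
  rw [hsucc, Function.iterate_succ_apply', intCoeff_xD, ← hsucc]
  push_cast [Nat.cast_sub (by omega : 1 ≤ 2 * n)]
  ring_nf

lemma bC_two_mul_add_one {n : ℕ} (hn : 1 ≤ n) (i j : ℤ) :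
    bC (2*n+1) i j =
      (4*(n:ℚ)-2*(i:ℚ)-2*(j:ℚ)+1) * bC (2*n) (i-1) j + (2*(i:ℚ)+2) * bC (2*n) i j
        + (2*(j:ℚ)+2) * bC (2*n) (i-1) (j+1) := by
  have hodd : ¬ Even (2 * n + 1) := by simp [parity_simps]
  simp only [bC_eq_intCoeff (by omega : 1 ≤ 2 * n), bC_eq_intCoeff (by omega : 1 ≤ 2 * n + 1),
    hodd, even_two_mul, if_true, if_false, Function.iterate_succ_apply', intCoeff_xD]
  push_cast
  ring_nf

noncomputable def bExponent (n i j : ℕ) : Fin 3 →₀ ℕ :=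
  Finsupp.single 0 (2 * i + 2) + Finsupp.single 1 (2 * n - 2 * i - 2 * j - if Even n then 1 else 2)
    + Finsupp.single 2 (if Even n then 2 * j else 2 * j + 1)

lemma bC_natCast (n i j : ℕ) : bC n i j = coeff (bExponent n i j) (xD^[n] (X 1)) := by
  rw [bC, if_pos (by omega)]
  congr 1
  ext k
  fin_cases k <;> simp [bExponent] <;> (try split_ifs) <;> omega

lemma bExponent_injective (n : ℕ) :
    Function.Injective fun ij : ℕ × ℕ => bExponent n ij.1 ij.2 := by
  rintro ⟨i, j⟩ ⟨i', j'⟩ h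
  have h0 := DFunLike.congr_fun h 0
  have h2 := DFunLike.congr_fun h 2
  simp [bExponent] at h0 h2
  split_ifs at h2 <;> ext <;> simp <;> omega

lemma exists_bExponent_eq {n : ℕ} (hn : 1 ≤ n) {m : Fin 3 →₀ ℕ}
    (hm : m ∈ (xD^[n] (X 1)).support) : ∃ i < n + 1, ∃ j < n + 1, bExponent n i j = m := by
  have hm' : intCoeff ![(m 0 : ℤ), m 1, m 2] (xD^[n] (X 1)) ≠ 0 := by
    rw [show ![(m 0 : ℤ), m 1, m 2] = fun k => (m k : ℤ) by ext k; fin_cases k <;> rfl,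
      intCoeff_natCast]
    exact mem_support_iff.mp hm
  obtain ⟨hx, hz⟩ := parity_of_intCoeff_xD_iterate_ne_zero n hm'
  have hx0 : m 0 ≠ 0 := by
    intro h0
    obtain ⟨k, rfl⟩ : ∃ k, n = k + 1 := ⟨n - 1, by omega⟩
    rw [Function.iterate_succ_apply', h0, Nat.cast_zero, intCoeff_zero_xD] at hm'
    exact hm' rfl
  have hdeg : m 0 + m 1 + m 2 = 2 * n + 1 := by
    by_contra h
    refine mem_support_iff.mp hm ((isHomogeneous_xD_iterate n).coeff_eq_zero ?_)
    rwa [Finsupp.degree_eq_sum, Fin.sum_univ_three]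
  simp only [Int.even_coe_nat, Nat.even_iff] at hx hz
  refine ⟨m 0 / 2 - 1, by omega, m 2 / 2, by omega, ?_⟩
  ext k
  fin_cases k <;> simp [bExponent, Nat.even_iff] <;> (try split_ifs) <;> omega

lemma sum_bC_eq_eval_one {n : ℕ} (hn : 1 ≤ n) :
    ∑ i ∈ range (n + 1), ∑ j ∈ range (n + 1), bC n i j = eval 1 (xD^[n] (X 1)) := by
  have hsub : (xD^[n] (X 1)).support ⊆
      (range (n + 1) ×ˢ range (n + 1)).image fun ij => bExponent n ij.1 ij.2 := fun m hm => by
    obtain ⟨i, hi, j, hj, rfl⟩ := exists_bExponent_eq hn hm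
    exact mem_image.mpr ⟨(i, j), by simp [hi, hj], rfl⟩
  simp only [bC_natCast, ← Finset.sum_product']
  rw [← Finset.sum_image (f := fun m => coeff m (xD^[n] (X 1)))
      fun x _ y _ h => bExponent_injective n h, eval_eq,
    ← Finset.sum_subset hsub fun m _ hm => notMem_support_iff.mp hm]
  simp

theorem stmt19 (n : ℕ) (hn : 1 ≤ n) :
    (∀ i j : ℤ, 0 ≤ i → 0 ≤ j →
      bC (2*n) i j =
        (4*(n:ℚ)-2*(i:ℚ)-2*(j:ℚ)) * bC (2*n-1) (i-1) (j-1) + (2*(i:ℚ)+2) * bC (2*n-1) i (j-1)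
          + (2*(j:ℚ)+1) * bC (2*n-1) (i-1) j ∧
      bC (2*n+1) i j =
        (4*(n:ℚ)-2*(i:ℚ)-2*(j:ℚ)+1) * bC (2*n) (i-1) j + (2*(i:ℚ)+2) * bC (2*n) i j
          + (2*(j:ℚ)+2) * bC (2*n) (i-1) (j+1)) ∧
    ∑ i ∈ Finset.range (n+1), ∑ j ∈ Finset.range (n+1), bC n (i:ℤ) (j:ℤ)
      = ((2*n-1).doubleFactorial : ℚ) := by
  refine ⟨fun i j _ _ => ⟨bC_two_mul hn i j, bC_two_mul_add_one hn i j⟩, ?_⟩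
  rw [sum_bC_eq_eval_one hn, eval_one_xD_iterate]
end
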